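/- Let I ⊂ J be ideals in a Noetherian ring B with I a reduction of J. Then for every prime P of B, the analytic spreads agree: ℓ(I B_P) = ℓ(J B_P). -/

import Mathlib

open TensorProduct IsLocalRing

/-- The analytic spread of an ideal `I` in a local ring `(A, M)`:
the Krull dimension of `A/M ⊗_A Gr_I(A)`, equivalently (as used here) of the
special fiber `A/M ⊗_A A[IW]` of the Rees algebra. -/
noncomputable def analyticSpread (A : Type*) [CommRing A] [IsLocalRing A] (I : Ideal A) :
    WithBot (WithTop ℕ) :=
  ringKrullDim ((ResidueField A) ⊗[A] (reesAlgebra I))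

/-!
From `I * J ^ n = J ^ (n + 1)` one gets `J ^ (n + m) = I ^ m * J ^ n`, so the Rees algebra
`A[Jt]` is spanned over `A[It]` by its monomials of degree `≤ n`: it is a finite, hence
integral, extension of `A[It]`. An integral extension `R ⊆ S` preserves Krull dimension
(incomparability and going up), and by lying over `𝔞S ∩ R` has the same radical as `𝔞`, so
`R ⧸ 𝔞` and `S ⧸ 𝔞S` have the same dimension. For `𝔞 = 𝔪 A[It]` these are the special fibres
of the two Rees algebras. The reduction equation survives localization at `P`.
-/

section KrullDim

variable {R S : Type*} [CommRing R] [CommRing S] [Algebra R S]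

theorem ringKrullDim_eq_of_isIntegral [Algebra.IsIntegral R S] [FaithfulSMul R S] :
    ringKrullDim S = ringKrullDim R := by
  refine le_antisymm ?_ ?_
  · exact Order.krullDim_le_of_strictMono (PrimeSpectrum.comap (algebraMap R S))
      fun _ _ hpq => Ideal.IsIntegral.comap_lt_comap (R := R) hpq
  · refine iSup_le fun l => ?_
    obtain ⟨P, _, _⟩ := (Ideal.nonempty_primesOver (S := S) l.head.asIdeal).some
    obtain ⟨L, hL, -⟩ := Ideal.exists_ltSeries_of_hasGoingUp l P
    exact hL ▸ Order.LTSeries.length_le_krullDim L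

theorem ringKrullDim_quotient_eq_of_radical_eq {I J : Ideal R} (h : I.radical = J.radical) :
    ringKrullDim (R ⧸ I) = ringKrullDim (R ⧸ J) := by
  rw [ringKrullDim_quotient, ringKrullDim_quotient, ← PrimeSpectrum.zeroLocus_radical, h,
    PrimeSpectrum.zeroLocus_radical]

theorem Ideal.comap_map_le_radical_of_isIntegral [Algebra.IsIntegral R S] [FaithfulSMul R S]
    (I : Ideal R) : (I.map (algebraMap R S)).comap (algebraMap R S) ≤ I.radical := by
  rw [Ideal.radical_eq_sInf]
  refine le_sInf fun p ⟨hIp, hp⟩ => ?_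
  have hker : (⊥ : Ideal S).comap (algebraMap R S) ≤ p := by
    simp [← RingHom.ker_eq_comap_bot,
      (RingHom.injective_iff_ker_eq_bot _).mp (FaithfulSMul.algebraMap_injective R S)]
  obtain ⟨Q, -, -, hQ⟩ := Ideal.exists_ideal_over_prime_of_isIntegral p ⊥ hker
  rw [← hQ]
  exact Ideal.comap_mono (Ideal.map_le_of_le_comap (hQ ▸ hIp))

theorem ringKrullDim_quotient_map_eq_of_isIntegral [Algebra.IsIntegral R S] [FaithfulSMul R S]
    (I : Ideal R) : ringKrullDim (S ⧸ I.map (algebraMap R S)) = ringKrullDim (R ⧸ I) := by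
  set I' := (I.map (algebraMap R S)).comap (algebraMap R S)
  have : FaithfulSMul (R ⧸ I') (S ⧸ I.map (algebraMap R S)) :=
    (faithfulSMul_iff_algebraMap_injective _ _).mpr Ideal.algebraMap_quotient_injective
  rw [ringKrullDim_eq_of_isIntegral (R := R ⧸ I')]
  exact ringKrullDim_quotient_eq_of_radical_eq (le_antisymm
    (Ideal.radical_le_radical_iff.mpr (Ideal.comap_map_le_radical_of_isIntegral I))
    (Ideal.radical_mono Ideal.le_comap_map))

theorem ringKrullDim_residueField_tensorProduct (A B : Type*) [CommRing A] [IsLocalRing A]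
    [CommRing B] [Algebra A B] :
    ringKrullDim (ResidueField A ⊗[A] B) =
      ringKrullDim (B ⧸ (maximalIdeal A).map (algebraMap A B)) :=
  (ringKrullDim_eq_of_ringEquiv
    (Algebra.TensorProduct.quotIdealMapEquivQuotTensor B (maximalIdeal A)).toRingEquiv).symm

end KrullDim

section ReesAlgebra

open Polynomial

variable {A : Type*} [CommRing A] {I J : Ideal A}

theorem reesAlgebra_mono (h : I ≤ J) : reesAlgebra I ≤ reesAlgebra J := fun f hf =>
  (mem_reesAlgebra_iff J f).mpr fun i =>
    Ideal.pow_right_mono h i ((mem_reesAlgebra_iff I f).mp hf i)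

theorem pow_add_eq_pow_mul_pow_of_reduction {n : ℕ} (hn : I * J ^ n = J ^ (n + 1)) (m : ℕ) :
    J ^ (n + m) = I ^ m * J ^ n := by
  induction m with
  | zero => simp
  | succ m ih => rw [← add_assoc, pow_succ, ih, mul_assoc, ← pow_succ, ← hn]; ring

variable (J) in
noncomputable def reesAlgebraTrunc (n : ℕ) : Submodule A A[X] :=
  ⨆ d : Fin (n + 1), Submodule.map (monomial d) (J ^ (d : ℕ))

theorem reesAlgebraTrunc_fg (hJ : J.FG) (n : ℕ) : (reesAlgebraTrunc J n).FG :=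
  Submodule.fg_iSup _ fun _ => Submodule.FG.map _ (Ideal.FG.pow hJ)

theorem reesAlgebraTrunc_le_reesAlgebra (n : ℕ) :
    reesAlgebraTrunc J n ≤ Subalgebra.toSubmodule (reesAlgebra J) :=
  iSup_le fun _ => Submodule.map_le_iff_le_comap.mpr fun _ hr => reesAlgebra.monomial_mem.mpr hr

theorem monomial_mem_span_reesAlgebraTrunc {n : ℕ} (hn : I * J ^ n = J ^ (n + 1)) {d : ℕ}
    {r : A} (hr : r ∈ J ^ d) :
    monomial d r ∈ Submodule.span (reesAlgebra I) (reesAlgebraTrunc J n : Set A[X]) := by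
  rcases le_or_gt d n with hd | hd
  · refine Submodule.subset_span (Submodule.mem_iSup_of_mem (⟨d, by omega⟩ : Fin (n + 1)) ?_)
    exact Submodule.mem_map_of_mem hr
  · obtain ⟨m, rfl⟩ := Nat.exists_eq_add_of_lt hd
    rw [show n + m + 1 = n + (m + 1) by omega, pow_add_eq_pow_mul_pow_of_reduction hn] at hr
    refine Submodule.mul_induction_on hr (fun x hx y hy => ?_) fun _ _ => by
      rw [map_add]; exact add_mem
    have hy' : monomial n y ∈ reesAlgebraTrunc J n :=
      Submodule.mem_iSup_of_mem (⟨n, by omega⟩ : Fin (n + 1)) (Submodule.mem_map_of_mem hy)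
    have : monomial (m + 1) x * monomial n y ∈
        Submodule.span (reesAlgebra I) (reesAlgebraTrunc J n : Set A[X]) :=
      Submodule.smul_mem _ (⟨monomial (m + 1) x, reesAlgebra.monomial_mem.mpr hx⟩ :
        reesAlgebra I) (Submodule.subset_span hy')
    rwa [monomial_mul_monomial, add_comm (m + 1), ← add_assoc] at this

theorem reesAlgebra_subset_span_reesAlgebraTrunc {n : ℕ} (hn : I * J ^ n = J ^ (n + 1)) :
    (reesAlgebra J : Set A[X]) ⊆
      Submodule.span (reesAlgebra I) (reesAlgebraTrunc J n : Set A[X]) :=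
  fun f hf => f.as_sum_support ▸ Submodule.sum_mem _ fun i _ =>
    monomial_mem_span_reesAlgebraTrunc hn ((mem_reesAlgebra_iff J f).mp hf i)

theorem finite_reesAlgebra_inclusion_of_reduction (hJ : J.FG) (hIJ : I ≤ J) {n : ℕ}
    (hn : I * J ^ n = J ^ (n + 1)) :
    (Subalgebra.inclusion (reesAlgebra_mono hIJ)).toRingHom.Finite := by
  let := (Subalgebra.inclusion (reesAlgebra_mono hIJ)).toRingHom.toAlgebra
  let N := Submodule.span (reesAlgebra I) (reesAlgebraTrunc J n : Set A[X])
  have hN : N.FG := by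
    obtain ⟨G, hG⟩ := reesAlgebraTrunc_fg hJ n
    exact ⟨G, by rw [← Submodule.span_span_of_tower A, hG]⟩
  have hNJ : ∀ f ∈ N, f ∈ reesAlgebra J := fun f hf => by
    induction hf using Submodule.span_induction with
    | mem f hf => exact reesAlgebraTrunc_le_reesAlgebra n hf
    | zero => exact zero_mem _
    | add f g _ _ hf hg => exact add_mem hf hg
    | smul s f _ hf => exact mul_mem (reesAlgebra_mono hIJ s.2) hf
  let toReesAlgebra : N →ₗ[reesAlgebra I] reesAlgebra J :=
    { toFun f := ⟨f, hNJ f f.2⟩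
      map_add' _ _ := rfl
      map_smul' _ _ := rfl }
  have : Module.Finite (reesAlgebra I) N := Module.Finite.iff_fg.mpr hN
  exact Module.Finite.of_surjective toReesAlgebra fun f =>
    ⟨⟨f, reesAlgebra_subset_span_reesAlgebraTrunc hn f.2⟩, rfl⟩

end ReesAlgebra

theorem analyticSpread_eq_of_reduction {A : Type*} [CommRing A] [IsLocalRing A] {I J : Ideal A}
    (hJ : J.FG) (hIJ : I ≤ J) {n : ℕ} (hn : I * J ^ n = J ^ (n + 1)) :
    analyticSpread A I = analyticSpread A J := by
  let := (Subalgebra.inclusion (reesAlgebra_mono hIJ)).toRingHom.toAlgebra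
  have : Algebra.IsIntegral (reesAlgebra I) (reesAlgebra J) :=
    ⟨(finite_reesAlgebra_inclusion_of_reduction hJ hIJ hn).to_isIntegral⟩
  have : FaithfulSMul (reesAlgebra I) (reesAlgebra J) :=
    (faithfulSMul_iff_algebraMap_injective _ _).mpr (Subalgebra.inclusion_injective _)
  have hmap : ((maximalIdeal A).map (algebraMap A (reesAlgebra I))).map
      (algebraMap (reesAlgebra I) (reesAlgebra J)) =
        (maximalIdeal A).map (algebraMap A (reesAlgebra J)) := by
    rw [Ideal.map_map]; rfl
  rw [analyticSpread, analyticSpread, ringKrullDim_residueField_tensorProduct,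
    ringKrullDim_residueField_tensorProduct, ← hmap,
    ringKrullDim_quotient_map_eq_of_isIntegral (R := reesAlgebra I) (S := reesAlgebra J)]

/-- If `I ⊆ J` is a reduction in a Noetherian ring, then the analytic spreads of the
localizations at any prime agree. -/
theorem analyticSpread_localization_eq_of_reduction
    (B : Type*) [CommRing B] [IsNoetherianRing B] (I J : Ideal B) (hIJ : I ≤ J)
    (hred : ∃ n : ℕ, I * J ^ n = J ^ (n + 1))
    (P : Ideal B) [P.IsPrime] :
    analyticSpread (Localization.AtPrime P) (I.map (algebraMap B (Localization.AtPrime P)))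
      = analyticSpread (Localization.AtPrime P) (J.map (algebraMap B (Localization.AtPrime P))) := by
  obtain ⟨n, hn⟩ := hred
  refine analyticSpread_eq_of_reduction (Ideal.FG.map (IsNoetherian.noetherian J) _)
    (Ideal.map_mono hIJ) (n := n) ?_
  rw [← Ideal.map_pow, ← Ideal.map_pow, ← Ideal.map_mul, hn]
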